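/- arXiv:2009.11602 — 6 statements merged into one kernel-verified Lean document; each statement's English description precedes it below -/
import Mathlib

section
/- For every prime p, positive integer j, and positive integer δ, the formal power series congruence ∏_{n≥1} (1 - q^{δn})^{p^j} ≡ ∏_{n≥1} (1 - q^{pδn})^{p^{j-1}} (mod p^j) holds in ℤ[[q]]. -/
/-!
Modulo `p` the Frobenius gives `(1 - q^{δn})^p ≡ 1 - q^{pδn}`, hence
`P_δ^p ≡ P_{pδ} (mod p)` for every partial product `P_δ = ∏_{n ≤ m} (1 - q^{δn})`; raising a
congruence mod `p` to the power `p^{j-1}` upgrades it to one mod `p^j`. Since the coefficient of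
`q^m` of the infinite product only depends on the partial product up to `m`, this suffices.
-/

open Finset PowerSeries

/-- The infinite product `∏_{n ≥ 1} (1 - q^{δ n})` in `ℤ[[q]]`: since the factor at
index `n` is `1 + O(q^n)` (for `δ ≥ 1`), the coefficient of `q^m` of the infinite product
equals that of the finite partial product over `1 ≤ n ≤ m`. -/
noncomputable def prodQ (δ : ℕ) : PowerSeries ℤ :=
  PowerSeries.mk fun m =>
    PowerSeries.coeff (R := ℤ) m (∏ n ∈ Finset.Icc 1 m, (1 - PowerSeries.X ^ (δ * n)))

theorem Finset.dvd_prod_sub_prod {ι R : Type*} [CommRing R] {x : R} {s : Finset ι}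
    {f g : ι → R} (h : ∀ i ∈ s, x ∣ f i - g i) : x ∣ ∏ i ∈ s, f i - ∏ i ∈ s, g i := by
  simp only [← Ideal.mem_span_singleton, ← Ideal.Quotient.mk_eq_mk_iff_sub_mem] at h ⊢
  simp only [map_prod]
  exact prod_congr rfl h

theorem prime_dvd_one_sub_pow_sub {R : Type*} [CommRing R] {p : ℕ} (hp : p.Prime) (x : R) :
    (p : R) ∣ (1 - x) ^ p - (1 - x ^ p) := by
  obtain ⟨r, hr⟩ := exists_add_pow_prime_eq hp (1 - x) x
  rw [sub_add_cancel, one_pow] at hr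
  exact ⟨-((1 - x) * x * r), by linear_combination (-1 : R) * hr⟩

theorem prime_dvd_prod_one_sub_pow_sub {R : Type*} [CommRing R] {p : ℕ} (hp : p.Prime)
    (x : R) (δ : ℕ) (s : Finset ℕ) :
    (p : R) ∣ (∏ n ∈ s, (1 - x ^ (δ * n))) ^ p - ∏ n ∈ s, (1 - x ^ (p * δ * n)) := by
  rw [← prod_pow]
  refine dvd_prod_sub_prod fun n _ => ?_
  rw [show p * δ * n = δ * n * p by ring, pow_mul x (δ * n) p]
  exact prime_dvd_one_sub_pow_sub hp (x ^ (δ * n))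

theorem prime_pow_succ_dvd_prod_one_sub_pow_sub {R : Type*} [CommRing R] {p : ℕ}
    (hp : p.Prime) (x : R) (δ k : ℕ) (s : Finset ℕ) :
    (p : R) ^ (k + 1) ∣
      (∏ n ∈ s, (1 - x ^ (δ * n))) ^ p ^ (k + 1) - (∏ n ∈ s, (1 - x ^ (p * δ * n))) ^ p ^ k := by
  rw [pow_succ' p k, pow_mul]
  exact dvd_sub_pow_of_dvd_sub (prime_dvd_prod_one_sub_pow_sub hp x δ s) k

namespace PowerSeries

variable {R : Type*} [CommRing R]

theorem dvd_coeff_of_C_dvd {c : R} {f : R⟦X⟧} (h : C c ∣ f) (n : ℕ) : c ∣ coeff n f := by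
  obtain ⟨g, rfl⟩ := h
  exact ⟨coeff n g, coeff_C_mul n g c⟩

theorem coeff_pow_eq_of_X_pow_dvd_sub {f g : R⟦X⟧} {m : ℕ} (h : X ^ (m + 1) ∣ f - g) (a : ℕ) :
    coeff m (f ^ a) = coeff m (g ^ a) := by
  have := X_pow_dvd_iff.mp (h.trans (sub_dvd_pow_sub_pow f g a)) m m.lt_succ_self
  rwa [map_sub, sub_eq_zero] at this

theorem X_pow_dvd_prod_Icc_one_sub_sub {δ : ℕ} (hδ : 1 ≤ δ) {k N : ℕ} (hkN : k ≤ N) :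
    (X : R⟦X⟧) ^ (k + 1) ∣
      ∏ n ∈ Icc 1 N, (1 - X ^ (δ * n)) - ∏ n ∈ Icc 1 k, (1 - X ^ (δ * n)) := by
  induction N, hkN using Nat.le_induction with
  | base => rw [sub_self]; exact dvd_zero _
  | succ N hkN ih =>
    have hX : (X : R⟦X⟧) ^ (k + 1) ∣ X ^ (δ * (N + 1)) := pow_dvd_pow _ (by nlinarith)
    rw [prod_Icc_succ_top (by omega), mul_sub, mul_one, sub_right_comm]
    exact dvd_sub ih (dvd_mul_of_dvd_right hX _)

end PowerSeries

theorem X_pow_succ_dvd_prodQ_sub {δ : ℕ} (hδ : 1 ≤ δ) (m : ℕ) :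
    (X : ℤ⟦X⟧) ^ (m + 1) ∣ prodQ δ - ∏ n ∈ Icc 1 m, (1 - X ^ (δ * n)) := by
  refine X_pow_dvd_iff.mpr fun k hk => ?_
  rw [map_sub, prodQ, coeff_mk, ← neg_sub, ← map_sub, neg_eq_zero]
  exact X_pow_dvd_iff.mp (X_pow_dvd_prod_Icc_one_sub_sub hδ (Nat.lt_succ_iff.mp hk)) k
    k.lt_succ_self

/-- For every prime `p` and `j, δ ≥ 1`,
`∏_{n≥1}(1 - q^{δn})^{p^j} ≡ ∏_{n≥1}(1 - q^{pδn})^{p^{j-1}} (mod p^j)` in `ℤ[[q]]`. -/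
theorem stmt3 (p : ℕ) (hp : p.Prime) (j : ℕ) (hj : 1 ≤ j) (δ : ℕ) (hδ : 1 ≤ δ) (m : ℕ) :
    ((p : ℤ) ^ j) ∣
      PowerSeries.coeff (R := ℤ) m (prodQ δ ^ (p ^ j) - prodQ (p * δ) ^ (p ^ (j - 1))) := by
  obtain ⟨k, rfl⟩ : ∃ k, j = k + 1 := ⟨j - 1, by omega⟩
  have hpδ : 1 ≤ p * δ := Nat.mul_pos hp.pos hδ
  rw [Nat.add_sub_cancel, map_sub, coeff_pow_eq_of_X_pow_dvd_sub (X_pow_succ_dvd_prodQ_sub hδ m),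
    coeff_pow_eq_of_X_pow_dvd_sub (X_pow_succ_dvd_prodQ_sub hpδ m), ← map_sub]
  refine dvd_coeff_of_C_dvd ?_ m
  simpa using prime_pow_succ_dvd_prod_one_sub_pow_sub hp (X : ℤ⟦X⟧) δ k (Icc 1 m)
end

section
/- Ramanujan's theta function identity: ∑_{n≥0} q^{n(n+1)/2} = ∏_{n≥1} (1 - q^{2n})^2 / ∏_{n≥1} (1 - q^n) as formal power series in ℤ[[q]]. -/
open PowerSeries Finset

def tri (j : ℤ) : ℕ := (j * (j + 1) / 2).toNat

lemma two_mul_tri (j : ℤ) : 2 * (tri j : ℤ) = j * (j + 1) := by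
  have hdvd : (2 : ℤ) ∣ j * (j + 1) := (Int.even_mul_succ_self j).two_dvd
  have hnonneg : 0 ≤ j * (j + 1) / 2 := by
    apply Int.ediv_nonneg _ (by norm_num)
    rcases le_or_gt 0 j with h | h <;> nlinarith
  rw [tri, Int.toNat_of_nonneg hnonneg, Int.mul_ediv_cancel' hdvd]

lemma tri_natCast (k : ℕ) : tri k = k * (k + 1) / 2 := by
  have h : 2 * tri k = k * (k + 1) := by exact_mod_cast two_mul_tri k
  omega

lemma tri_natCast_eq_choose_two_add (k : ℕ) : tri k = k.choose 2 + k := by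
  rw [tri_natCast, Nat.choose_two_right]
  rcases k with _ | k
  · rfl
  · have : (k + 1) * (k + 1 + 1) = (k + 1) * k + 2 * (k + 1) := by ring
    rw [this, Nat.add_sub_cancel, Nat.add_mul_div_left _ _ two_pos]

lemma tri_sub_one_add (j : ℤ) : (tri (j - 1) : ℤ) + j = tri j := by
  have h1 := two_mul_tri (j - 1)
  have h2 := two_mul_tri j
  linarith

lemma tri_neg_sub_one (j : ℤ) : tri (-1 - j) = tri j := by
  have h1 := two_mul_tri (-1 - j)
  have h2 := two_mul_tri j
  have : (tri (-1 - j) : ℤ) = tri j := by linarith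
  exact_mod_cast this

lemma le_tri (j : ℤ) : j ≤ tri j := by
  have h := two_mul_tri j
  rcases le_or_gt j 0 with h0 | h0 <;> nlinarith

lemma neg_sub_one_le_tri (j : ℤ) : -1 - j ≤ tri j := by
  simpa [tri_neg_sub_one] using le_tri (-1 - j)

lemma sum_range_pow_tri_sub_eq_two_mul {S : Type*} [Semiring S] (x : S) (n : ℕ) :
    ∑ k ∈ range (2 * n + 2), x ^ tri (k - (n + 1))
      = 2 * ∑ k ∈ range (n + 1), x ^ tri k := by
  rw [show 2 * n + 2 = (n + 1) + (n + 1) by ring, sum_range_add, two_mul]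
  congr 1
  · rw [← sum_range_reflect]
    refine sum_congr rfl fun j hj => ?_
    have hj : j ≤ n := Nat.lt_succ_iff.mp (mem_range.mp hj)
    rw [← tri_neg_sub_one j, Nat.add_sub_cancel, Nat.cast_sub hj]
    congr 2
    ring
  · refine sum_congr rfl fun j _ => ?_
    push_cast
    congr 2
    ring

section QAnalogues

variable {R : Type*} [CommRing R]

-- `qPochhammer a q n` is `(a;q)_n`, and `qBinom q n k` below is `[n, k]_q`.
def qPochhammer (a q : R) (n : ℕ) : R := ∏ i ∈ range n, (1 - a * q ^ i)

@[simp] lemma qPochhammer_zero (a q : R) : qPochhammer a q 0 = 1 := prod_range_zero _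

lemma qPochhammer_succ (a q : R) (n : ℕ) :
    qPochhammer a q (n + 1) = qPochhammer a q n * (1 - a * q ^ n) :=
  prod_range_succ _ n

lemma qPochhammer_succ' (a q : R) (n : ℕ) :
    qPochhammer a q (n + 1) = (1 - a) * qPochhammer (a * q) q n := by
  simp only [qPochhammer, prod_range_succ', pow_succ, pow_zero, mul_one, mul_assoc, mul_comm]

lemma qPochhammer_add (a q : R) (m n : ℕ) :
    qPochhammer a q (m + n) = qPochhammer a q m * qPochhammer (a * q ^ m) q n := by
  simp only [qPochhammer, prod_range_add, pow_add, mul_assoc]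

lemma qPochhammer_mul_qPochhammer_neg (a q : R) (n : ℕ) :
    qPochhammer a q n * qPochhammer (-a) q n = qPochhammer (a ^ 2) (q ^ 2) n := by
  simp only [qPochhammer, ← prod_mul_distrib]
  exact prod_congr rfl fun i _ => by ring

def qBinom (q : R) : ℕ → ℕ → R
  | _, 0 => 1
  | 0, _ + 1 => 0
  | n + 1, k + 1 => qBinom q n k + q ^ (k + 1) * qBinom q n (k + 1)

variable (q : R)

@[simp] lemma qBinom_zero_right (n : ℕ) : qBinom q n 0 = 1 := by cases n <;> rfl

lemma qBinom_succ_succ (n k : ℕ) :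
    qBinom q (n + 1) (k + 1) = qBinom q n k + q ^ (k + 1) * qBinom q n (k + 1) := rfl

lemma qBinom_eq_zero_of_lt {n k : ℕ} (h : n < k) : qBinom q n k = 0 := by
  induction n generalizing k with
  | zero => obtain ⟨k, rfl⟩ := Nat.exists_eq_add_of_lt h; rfl
  | succ n ih =>
    obtain ⟨k, rfl⟩ := Nat.exists_eq_add_of_lt (Nat.zero_lt_of_lt h)
    rw [qBinom_succ_succ, ih (by omega), ih (by omega), mul_zero, add_zero]

@[simp] lemma qBinom_self (n : ℕ) : qBinom q n n = 1 := by
  induction n with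
  | zero => rfl
  | succ n ih =>
    rw [qBinom_succ_succ, ih, qBinom_eq_zero_of_lt q n.lt_succ_self, mul_zero, add_zero]

lemma sum_range_qBinom_succ_mul (N : ℕ) (g : ℕ → R) :
    ∑ k ∈ range (N + 2), qBinom q (N + 1) k * g k
      = ∑ k ∈ range (N + 1), qBinom q N k * (g (k + 1) + q ^ k * g k) := by
  have hshift : ∑ k ∈ range (N + 1), q ^ k * qBinom q N k * g k
      = ∑ k ∈ range (N + 1), q ^ (k + 1) * qBinom q N (k + 1) * g (k + 1) + g 0 := by
    have h := sum_range_succ' (fun k => q ^ k * qBinom q N k * g k) (N + 1)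
    rw [sum_range_succ, qBinom_eq_zero_of_lt q N.lt_succ_self] at h
    simpa using h
  rw [sum_range_succ', qBinom_zero_right, one_mul]
  simp only [qBinom_succ_succ, mul_add, add_mul, sum_add_distrib]
  rw [add_assoc, ← hshift]
  congr 1
  exact sum_congr rfl fun k _ => by ring

theorem sum_qBinom_mul_pow_choose_two (n : ℕ) (z : R) :
    ∑ k ∈ range (n + 1), qBinom q n k * (q ^ k.choose 2 * z ^ k) = qPochhammer (-z) q n := by
  induction n generalizing z with
  | zero => simp
  | succ n ih =>
    rw [sum_range_qBinom_succ_mul, qPochhammer_succ', neg_mul, ← ih (z * q), mul_sum]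
    refine sum_congr rfl fun k _ => ?_
    rw [Nat.choose_succ_succ', Nat.choose_one_right]
    ring

lemma qBinom_add_mul_qPochhammer (a b : ℕ) :
    qBinom q (a + b) b * qPochhammer q q b = qPochhammer (q ^ (a + 1)) q b := by
  induction a generalizing b with
  | zero => simp [qPochhammer]
  | succ a iha =>
    induction b with
    | zero => simp
    | succ b ihb =>
      have h := iha (b + 1)
      rw [qPochhammer_succ' (q ^ (a + 1)), ← pow_succ, qPochhammer_succ q q b] at h
      rw [show a + 1 + b = a + (b + 1) by ring] at ihb
      rw [show a + 1 + (b + 1) = a + (b + 1) + 1 by ring, qBinom_succ_succ, qPochhammer_succ q q b,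
        qPochhammer_succ]
      linear_combination (1 - q ^ (b + 1)) * ihb + q ^ (b + 1) * h

lemma qBinom_mul_qPochhammer {N k : ℕ} (h : k ≤ N) :
    qBinom q N k * qPochhammer q q N
      = qPochhammer (q ^ (N - k + 1)) q k * qPochhammer (q ^ (k + 1)) q (N - k) := by
  obtain ⟨a, rfl⟩ := Nat.exists_eq_add_of_le' h
  rw [Nat.add_sub_cancel, add_comm a k, qPochhammer_add, ← mul_assoc, add_comm k a,
    qBinom_add_mul_qPochhammer, ← pow_succ']

theorem sum_qBinom_mul_pow_tri (m n : ℕ) :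
    ∑ k ∈ range (m + n + 1), qBinom q (m + n) k * q ^ tri (k - m)
      = qPochhammer (-1) q m * qPochhammer (-q) q n := by
  induction m with
  | zero =>
    simp only [Nat.cast_zero, sub_zero, zero_add, qPochhammer_zero, one_mul]
    rw [← sum_qBinom_mul_pow_choose_two]
    refine sum_congr rfl fun k _ => ?_
    rw [tri_natCast_eq_choose_two_add, pow_add]
  | succ m ih =>
    rw [show m + 1 + n = m + n + 1 by ring, sum_range_qBinom_succ_mul, qPochhammer_succ,
      mul_right_comm, ← ih, sum_mul]
    refine sum_congr rfl fun k _ => ?_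
    have h1 : tri ((k + 1 : ℕ) - (m + 1 : ℕ)) = tri (k - m) := by push_cast; ring_nf
    have h2 : k + tri (k - (m + 1 : ℕ)) = tri (k - m) + m := by
      have := tri_sub_one_add (k - m)
      push_cast
      rw [show (k : ℤ) - (m + 1) = k - m - 1 by ring]
      omega
    rw [h1, ← pow_add, h2]
    ring

end QAnalogues

section Congruences

variable {R : Type*} [CommRing R]

lemma SModEq.mul_left_span_singleton {a f g : R} (h : f ≡ g [SMOD Ideal.span {a}]) (b : R) :
    b * f ≡ b * g [SMOD Ideal.span {b * a}] := by
  rw [SModEq.sub_mem, Ideal.mem_span_singleton] at h ⊢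
  rw [← mul_sub]
  exact mul_dvd_mul_left b h

lemma SModEq.span_pow_mono {x f g : R} {c d : ℕ} (h : f ≡ g [SMOD Ideal.span {x ^ d}])
    (hcd : c ≤ d) :
    f ≡ g [SMOD Ideal.span {x ^ c}] :=
  h.mono (Ideal.span_singleton_le_span_singleton.mpr (pow_dvd_pow x hcd))

lemma qPochhammer_smodEq_one (a q : R) (n : ℕ) :
    qPochhammer a q n ≡ 1 [SMOD Ideal.span {a}] := by
  have h : ∀ i ∈ range n, 1 - a * q ^ i ≡ 1 [SMOD Ideal.span {a}] := fun i _ => by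
    rw [SModEq.sub_mem, Ideal.mem_span_singleton]
    exact ⟨-q ^ i, by ring⟩
  simpa [qPochhammer] using SModEq.prod h

lemma qPochhammer_pow_smodEq (x : R) {δ r N : ℕ} (hδ : 0 < δ) (h : r ≤ N) :
    qPochhammer (x ^ δ) (x ^ δ) N ≡ qPochhammer (x ^ δ) (x ^ δ) r
      [SMOD Ideal.span {x ^ (r + 1)}] := by
  obtain ⟨s, rfl⟩ := Nat.exists_eq_add_of_le h
  rw [qPochhammer_add]
  conv_rhs => rw [← mul_one (qPochhammer (x ^ δ) (x ^ δ) r)]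
  refine SModEq.rfl.mul
    ((qPochhammer_smodEq_one _ _ s).mono (Ideal.span_singleton_le_span_singleton.mpr ?_))
  rw [← pow_mul, ← pow_add]
  exact pow_dvd_pow x (by nlinarith)

lemma qBinom_mul_qPochhammer_smodEq_one (x : R) {N k : ℕ} (h : k ≤ N) :
    qBinom x N k * qPochhammer x x N ≡ 1 [SMOD Ideal.span {x ^ (min k (N - k) + 1)}] := by
  rw [qBinom_mul_qPochhammer x h]
  simpa using ((qPochhammer_smodEq_one _ x k).span_pow_mono (by omega)).mul
    ((qPochhammer_smodEq_one _ x (N - k)).span_pow_mono (by omega))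

lemma le_tri_add_min (n k : ℕ) :
    n + 1 ≤ tri (k - (n + 1)) + (min k (2 * n + 1 - k) + 1) := by
  have h1 := le_tri (k - (n + 1))
  have h2 := neg_sub_one_le_tri (k - (n + 1))
  omega

lemma sum_qBinom_mul_pow_tri_mul_qPochhammer_smodEq (x : R) (n : ℕ) :
    (∑ k ∈ range (2 * n + 2), qBinom x (2 * n + 1) k * x ^ tri (k - (n + 1)))
        * qPochhammer x x (2 * n + 1)
      ≡ ∑ k ∈ range (2 * n + 2), x ^ tri (k - (n + 1)) [SMOD Ideal.span {x ^ (n + 1)}] := by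
  rw [sum_mul]
  refine SModEq.sum fun k hk => ?_
  have hk : k ≤ 2 * n + 1 := Nat.lt_succ_iff.mp (mem_range.mp hk)
  have h := (qBinom_mul_qPochhammer_smodEq_one x hk).mul_left_span_singleton (x ^ tri (k - (n + 1)))
  rw [mul_one, ← pow_add] at h
  convert h.span_pow_mono (le_tri_add_min n k) using 1
  ring

lemma smodEq_X_pow_iff {f g : R⟦X⟧} {c : ℕ} :
    f ≡ g [SMOD Ideal.span {X ^ c}] ↔ ∀ m < c, coeff m f = coeff m g := by
  simp only [SModEq.sub_mem, Ideal.mem_span_singleton, X_pow_dvd_iff, map_sub, sub_eq_zero]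

end Congruences

lemma prod_Icc_one_sub_pow_eq_qPochhammer {R : Type*} [CommRing R] (x : R) (δ m : ℕ) :
    ∏ n ∈ Icc 1 m, (1 - x ^ (δ * n)) = qPochhammer (x ^ δ) (x ^ δ) m := by
  rw [← Ico_add_one_right_eq_Icc, prod_Ico_eq_prod_range, Nat.add_sub_cancel, qPochhammer]
  refine prod_congr rfl fun i _ => ?_
  rw [← pow_mul, ← pow_add]
  ring_nf

lemma prodQ_smodEq {δ m N : ℕ} (hδ : 0 < δ) (h : m ≤ N) :
    prodQ δ ≡ qPochhammer (X ^ δ) (X ^ δ) N [SMOD Ideal.span {X ^ (m + 1)}] := by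
  rw [smodEq_X_pow_iff]
  intro r hr
  rw [prodQ, coeff_mk, prod_Icc_one_sub_pow_eq_qPochhammer]
  have h := qPochhammer_pow_smodEq (X : ℤ⟦X⟧) hδ (by omega : r ≤ N)
  exact (smodEq_X_pow_iff.mp h r r.lt_succ_self).symm

lemma mk_sum_ite_tri_smodEq {R : Type*} [CommRing R] (m : ℕ) :
    (PowerSeries.mk fun m => ∑ n ∈ range (m + 1), if n * (n + 1) / 2 = m then (1 : R) else 0)
      ≡ ∑ k ∈ range (m + 1), X ^ tri k [SMOD Ideal.span {X ^ (m + 1)}] := by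
  rw [smodEq_X_pow_iff]
  intro r hr
  simp only [coeff_mk, map_sum, coeff_X_pow, tri_natCast, eq_comm (a := r)]
  refine sum_subset (range_subset_range.mpr (by omega)) fun k _ hk => if_neg ?_
  have hrk : r < k := by simpa using hk
  have hk_le : k ≤ tri k := by exact_mod_cast le_tri k
  rw [tri_natCast] at hk_le
  omega

lemma smodEq_of_two_mul_smodEq {f g : ℤ⟦X⟧} {c : ℕ}
    (h : 2 * f ≡ 2 * g [SMOD Ideal.span {X ^ c}]) :
    f ≡ g [SMOD Ideal.span {X ^ c}] := by
  rw [smodEq_X_pow_iff] at h ⊢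
  intro m hm
  have := h m hm
  rw [two_mul, two_mul, map_add, map_add] at this
  omega

lemma sum_range_X_pow_tri_smodEq (n : ℕ) :
    ∑ k ∈ range (n + 1), (X : ℤ⟦X⟧) ^ tri k
      ≡ qPochhammer (-X) X n ^ 2 * qPochhammer X X (2 * n + 1)
        [SMOD Ideal.span {X ^ (n + 1)}] := by
  refine smodEq_of_two_mul_smodEq ?_
  have hJ := sum_qBinom_mul_pow_tri (X : ℤ⟦X⟧) (n + 1) n
  rw [show n + 1 + n + 1 = 2 * n + 2 by ring, show n + 1 + n = 2 * n + 1 by ring,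
    qPochhammer_succ', neg_one_mul, sub_neg_eq_add, one_add_one_eq_two] at hJ
  push_cast at hJ
  have h := (sum_qBinom_mul_pow_tri_mul_qPochhammer_smodEq (X : ℤ⟦X⟧) n).symm
  rwa [hJ, sum_range_pow_tri_sub_eq_two_mul, mul_assoc 2, ← pow_two, mul_assoc] at h

/-- Ramanujan's theta identity: `∑_{n≥0} q^{n(n+1)/2} = (q²;q²)_∞² / (q;q)_∞`,
stated (equivalently, since `(q;q)_∞` has constant term `1`, hence is a unit) as
`ψ(q) · (q;q)_∞ = (q²;q²)_∞²` in `ℤ[[q]]`. -/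
theorem stmt4 :
    (PowerSeries.mk fun m =>
        ∑ n ∈ Finset.range (m + 1), if n * (n + 1) / 2 = m then (1 : ℤ) else 0)
      * prodQ 1 = prodQ 2 ^ 2 := by
  ext m
  refine smodEq_X_pow_iff.mp ?_ m m.lt_succ_self
  have hX : qPochhammer (X : ℤ⟦X⟧) X (2 * m + 1) ≡ qPochhammer X X m
      [SMOD Ideal.span {X ^ (m + 1)}] := by
    simpa using qPochhammer_pow_smodEq (X : ℤ⟦X⟧) one_pos (by omega : m ≤ 2 * m + 1)
  calc _ ≡ (∑ k ∈ range (m + 1), X ^ tri k) * qPochhammer X X (2 * m + 1) [SMOD _] :=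
        (mk_sum_ite_tri_smodEq (R := ℤ) m).mul (by simpa using prodQ_smodEq one_pos (by omega))
    _ ≡ qPochhammer (-X) X m ^ 2 * qPochhammer X X (2 * m + 1) * qPochhammer X X (2 * m + 1)
        [SMOD _] := (sum_range_X_pow_tri_smodEq m).mul .rfl
    _ ≡ qPochhammer (-X) X m ^ 2 * qPochhammer X X m * qPochhammer X X m [SMOD _] :=
        (SModEq.rfl.mul hX).mul hX
    _ = qPochhammer (X ^ 2) (X ^ 2) m ^ 2 := by rw [← qPochhammer_mul_qPochhammer_neg]; ring
    _ ≡ prodQ 2 ^ 2 [SMOD _] := ((prodQ_smodEq two_pos le_rfl).symm).pow 2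
end

section
/- For every positive integer t, the generating function identity ∑_{n≥0} p_{t,t}(n) q^n = (1/(q;q)_∞) · ∑_{n≥0} (-1)^n q^{t n(n+1)/2} holds as formal power series. -/
/-- `mex_{A,a}(λ)`: the least positive integer `≡ a (mod A)` that is not a part of `λ`. -/
noncomputable def mexP (A a : ℕ) {n : ℕ} (l : n.Partition) : ℕ :=
  sInf {k : ℕ | 0 < k ∧ k % A = a % A ∧ k ∉ l.parts}

/-- `p_{A,a}(n)`: the number of partitions `λ` of `n` with `mex_{A,a}(λ) ≡ a (mod 2A)`. -/
noncomputable def pAA (A a n : ℕ) : ℕ :=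
  Nat.card {l : n.Partition // mexP A a l % (2 * A) = a % (2 * A)}

/-- The alternating theta series `∑_{n ≥ 0} (-1)^n q^{t n(n+1)/2}`. Since `t ≥ 1` and
`n(n+1)/2 ≥ n`, only indices `n ≤ m` can contribute to the coefficient of `q^m`. -/
noncomputable def thetaAlt (t : ℕ) : PowerSeries ℤ :=
  PowerSeries.mk fun m =>
    ∑ n ∈ Finset.range (m + 1), if t * (n * (n + 1) / 2) = m then (-1 : ℤ) ^ n else 0

/-!
Let `r(λ)` be the number of multiples `t, 2t, …, rt` that are parts of `λ` before the first one
that is missing, so that `mex_{t,t}(λ) = t (r + 1)` and `λ` is counted by `p_{t,t}(n)` iff `r` is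
even. Writing `[r even] = ∑_{k ≤ r} (-1)^k` and exchanging the sums, `p_{t,t}(n)` becomes the
alternating sum over `k` of the number of partitions of `n` containing `t, 2t, …, kt`; removing
these parts identifies them with the partitions of `n - t k(k+1)/2`. Hence
`∑ p_{t,t}(n) q^n = (∑ (-1)^k q^{t k(k+1)/2}) ∑ p(n) q^n`, and Euler's identity
`(∑ p(n) q^n) (q;q)_∞ = 1` concludes.
-/

open Finset PowerSeries PowerSeries.WithPiTopology

theorem prod_Icc_one_eq_prod_range {M : Type*} [CommMonoid M] (f : ℕ → M) (d : ℕ) :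
    ∏ n ∈ Icc 1 d, f n = ∏ i ∈ range d, f (i + 1) := by
  rw [range_eq_Ico, prod_Ico_add' f 0 d 1]; rfl

theorem hasProd_prodQ {δ : ℕ} (hδ : 0 < δ) :
    HasProd (fun i ↦ (1 : ℤ⟦X⟧) - X ^ (δ * (i + 1))) (prodQ δ) := by
  rw [HasProd, tendsto_iff_coeff_tendsto]
  refine fun d ↦ tendsto_atTop_of_eventually_const (fun s (hs : s ≥ range d) ↦ ?_)
  rw [prodQ, coeff_mk, prod_Icc_one_eq_prod_range (fun n ↦ 1 - X ^ (δ * n)), ← prod_sdiff hs,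
    mul_comm]
  refine coeff_mul_prod_one_sub_of_lt_order d _ _ _ fun i hi ↦ ?_
  rw [order_X_pow, Nat.cast_lt]
  have : d ≤ i := by simpa using (mem_sdiff.mp hi).2
  nlinarith

noncomputable def partitionSeries (R : Type*) [Semiring R] : R⟦X⟧ :=
  PowerSeries.mk fun n ↦ (Fintype.card n.Partition : R)

theorem partitionSeries_mul_prodQ_one : partitionSeries ℤ * prodQ 1 = 1 := by
  have hP : HasProd (fun i ↦ ∑' j : ℕ, (X : ℤ⟦X⟧) ^ ((i + 1) * j)) (partitionSeries ℤ) := by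
    simpa [partitionSeries, Nat.Partition.restricted] using
      Nat.Partition.hasProd_powerSeriesMk_card_restricted ℤ (fun _ ↦ True)
  have hQ : HasProd (fun i ↦ (1 : ℤ⟦X⟧) - X ^ (i + 1)) (prodQ 1) := by
    simpa using hasProd_prodQ zero_lt_one
  refine (hP.mul hQ).unique ?_
  convert hasProd_one with i
  simp_rw [pow_mul]
  exact tsum_pow_mul_one_sub_of_constantCoeff_eq_zero (by simp)

theorem sum_range_succ_neg_one_pow (r : ℕ) :
    ∑ k ∈ range (r + 1), (-1 : ℤ) ^ k = if Even r then 1 else 0 := by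
  rw [← Fin.sum_univ_eq_sum_range, Fin.sum_neg_one_pow]
  simp only [Nat.even_add_one, ite_not]

theorem mul_succ_mod_two_mul_eq_iff {t : ℕ} (ht : 0 < t) (r : ℕ) :
    t * (r + 1) % (2 * t) = t % (2 * t) ↔ Even r := by
  rw [mul_comm 2 t, Nat.mul_mod_mul_left, Nat.mod_eq_of_lt (by omega : t < t * 2)]
  nth_rewrite 2 [← mul_one t]
  rw [Nat.mul_left_cancel_iff ht, Nat.even_iff]
  omega

namespace Nat.Partition

def equivOfLeParts {D : Multiset ℕ} (hD : ∀ i ∈ D, 0 < i) {m : ℕ} (h : D.sum ≤ m) :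
    {l : m.Partition // D ≤ l.parts} ≃ (m - D.sum).Partition where
  toFun l := ⟨l.1.parts - D,
    fun hi ↦ l.1.parts_pos (Multiset.mem_of_le (Multiset.sub_le_self _ _) hi), by
    have := congrArg Multiset.sum (tsub_add_cancel_of_le l.2)
    rw [Multiset.sum_add, l.1.parts_sum] at this
    omega⟩
  invFun l := ⟨⟨l.parts + D, fun hi ↦ (Multiset.mem_add.mp hi).elim l.parts_pos (hD _), by
    rw [Multiset.sum_add, l.parts_sum]; omega⟩, Multiset.le_add_left _ _⟩
  left_inv l := Subtype.ext (Nat.Partition.ext (tsub_add_cancel_of_le l.2))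
  right_inv l := Nat.Partition.ext (add_tsub_cancel_right _ _)

theorem card_filter_le_parts {D : Multiset ℕ} (hD : ∀ i ∈ D, 0 < i) (m : ℕ) :
    #{l : m.Partition | D ≤ l.parts} =
      if D.sum ≤ m then Fintype.card (m - D.sum).Partition else 0 := by
  split_ifs with h
  · rw [← Fintype.card_subtype]
    exact Fintype.card_congr (equivOfLeParts hD h)
  · refine Finset.card_eq_zero.mpr (filter_eq_empty_iff.mpr fun l _ hl ↦ h ?_)
    obtain ⟨u, hu⟩ := Multiset.le_iff_exists_add.mp hl
    have := congrArg Multiset.sum hu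
    rw [Multiset.sum_add, l.parts_sum] at this
    omega

def multiples (t k : ℕ) : Multiset ℕ := (range k).val.map (fun i ↦ t * (i + 1))

theorem sum_multiples (t k : ℕ) : (multiples t k).sum = t * (k * (k + 1) / 2) := by
  have h : ∑ i ∈ range (k + 1), i = ∑ i ∈ range k, (i + 1) := by simp [sum_range_succ']
  rw [multiples, ← Finset.sum_eq_multiset_sum, ← Finset.mul_sum, ← h, sum_range_id,
    Nat.add_sub_cancel, mul_comm k]

theorem multiples_le_iff {t : ℕ} (ht : 0 < t) {k : ℕ} {s : Multiset ℕ} :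
    multiples t k ≤ s ↔ ∀ i < k, t * (i + 1) ∈ s := by
  have hnodup : (multiples t k).Nodup :=
    (range k).nodup.map fun i j h ↦ by simpa [ht.ne'] using h
  rw [Multiset.le_iff_subset hnodup, multiples]
  simp [Multiset.subset_iff]

variable {t : ℕ} {n : ℕ}

noncomputable def runOfMultiples (t : ℕ) (l : n.Partition) : ℕ :=
  sInf {j | t * (j + 1) ∉ l.parts}

theorem mul_succ_notMem_parts (ht : 0 < t) (l : n.Partition) : t * (n + 1) ∉ l.parts :=
  fun h ↦ by have := l.le_of_mem_parts h; nlinarith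

theorem runOfMultiples_le (ht : 0 < t) (l : n.Partition) : runOfMultiples t l ≤ n :=
  Nat.sInf_le (mul_succ_notMem_parts ht l)

theorem le_runOfMultiples_iff (ht : 0 < t) (l : n.Partition) {k : ℕ} :
    k ≤ runOfMultiples t l ↔ ∀ i < k, t * (i + 1) ∈ l.parts := by
  rw [runOfMultiples, le_csInf_iff' ⟨_, mul_succ_notMem_parts ht l⟩]
  refine ⟨fun h i hi ↦ by_contra fun hn ↦ (h hn).not_gt hi, fun h j hj ↦ ?_⟩
  by_contra! hjk
  exact hj (h j hjk)

theorem mexP_self (ht : 0 < t) (l : n.Partition) : mexP t t l = t * (runOfMultiples t l + 1) := by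
  have hr : t * (runOfMultiples t l + 1) ∉ l.parts :=
    Nat.sInf_mem (s := {j | t * (j + 1) ∉ l.parts}) ⟨_, mul_succ_notMem_parts ht l⟩
  refine le_antisymm (Nat.sInf_le ⟨by positivity, by simp, hr⟩)
    (le_csInf ⟨_, by positivity, by simp, hr⟩ ?_)
  rintro k ⟨hk0, hkt, hk⟩
  obtain ⟨j, rfl⟩ : t ∣ k := Nat.dvd_of_mod_eq_zero (by simpa using hkt)
  obtain ⟨i, rfl⟩ : ∃ i, j = i + 1 := Nat.exists_eq_succ_of_ne_zero (by rintro rfl; simp at hk0)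
  exact Nat.mul_le_mul_left t (Nat.succ_le_succ (Nat.sInf_le hk))

theorem card_le_runOfMultiples (ht : 0 < t) (m k : ℕ) :
    #{l : m.Partition | k ≤ runOfMultiples t l} =
      if t * (k * (k + 1) / 2) ≤ m then Fintype.card (m - t * (k * (k + 1) / 2)).Partition
      else 0 := by
  have hpos : ∀ i ∈ multiples t k, 0 < i := by
    simp only [multiples, Multiset.mem_map, mem_val]
    rintro _ ⟨i, -, rfl⟩
    positivity
  simp_rw [le_runOfMultiples_iff ht, ← multiples_le_iff ht, card_filter_le_parts hpos,
    sum_multiples]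

theorem pAA_self_eq_sum (ht : 0 < t) (m : ℕ) :
    (pAA t t m : ℤ) =
      ∑ k ∈ range (m + 1), (-1) ^ k * (#{l : m.Partition | k ≤ runOfMultiples t l} : ℤ) := by
  have hcard : pAA t t m = #{l : m.Partition | Even (runOfMultiples t l)} := by
    simp_rw [pAA, Nat.card_eq_fintype_card, Fintype.card_subtype, mexP_self ht,
      mul_succ_mod_two_mul_eq_iff ht]
  have hrun (l : m.Partition) : range (runOfMultiples t l + 1) =
      {k ∈ range (m + 1) | k ≤ runOfMultiples t l} := by
    ext k
    simp only [mem_range, mem_filter]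
    have := runOfMultiples_le ht l
    omega
  rw [hcard, natCast_card_filter]
  simp_rw [← sum_range_succ_neg_one_pow, hrun, sum_filter]
  rw [sum_comm]
  refine sum_congr rfl fun k _ ↦ ?_
  rw [← sum_filter, sum_const, nsmul_eq_mul, mul_comm]

end Nat.Partition

theorem PowerSeries.coeff_mul_congr_left {R : Type*} [Semiring R] {f f' : R⟦X⟧} (g : R⟦X⟧)
    {m : ℕ} (h : ∀ a ≤ m, coeff a f = coeff a f') : coeff m (f * g) = coeff m (f' * g) := by
  simp_rw [coeff_mul]
  exact sum_congr rfl fun p hp ↦ by rw [h p.1 (Finset.HasAntidiagonal.antidiagonal.fst_le hp)]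

theorem coeff_thetaAlt_of_le {t : ℕ} (ht : 0 < t) {a m : ℕ} (ha : a ≤ m) :
    coeff a (thetaAlt t) =
      coeff a (∑ k ∈ range (m + 1), C ((-1 : ℤ) ^ k) * X ^ (t * (k * (k + 1) / 2))) := by
  simp only [thetaAlt, coeff_mk, map_sum, coeff_C_mul_X_pow, eq_comm (a := a)]
  refine sum_subset (range_subset_range.mpr (by omega)) fun k _ hk ↦ if_neg fun h ↦ ?_
  simp only [mem_range, not_lt] at hk
  have : k ≤ k * (k + 1) / 2 :=
    (Nat.le_div_iff_mul_le two_pos).mpr (Nat.mul_le_mul_left k (by omega))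
  have : k ≤ t * (k * (k + 1) / 2) := this.trans (Nat.le_mul_of_pos_left _ ht)
  omega

theorem coeff_thetaAlt_mul {t : ℕ} (ht : 0 < t) (g : ℤ⟦X⟧) (m : ℕ) :
    coeff m (thetaAlt t * g) = ∑ k ∈ range (m + 1), (-1) ^ k *
      if t * (k * (k + 1) / 2) ≤ m then coeff (m - t * (k * (k + 1) / 2)) g else 0 := by
  rw [coeff_mul_congr_left g fun a ha ↦ coeff_thetaAlt_of_le ht ha, sum_mul, map_sum]
  simp_rw [mul_assoc, coeff_C_mul, coeff_X_pow_mul']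

theorem mk_pAA_self_eq {t : ℕ} (ht : 0 < t) :
    (PowerSeries.mk fun n ↦ (pAA t t n : ℤ)) = thetaAlt t * partitionSeries ℤ := by
  ext m
  rw [coeff_mk, Nat.Partition.pAA_self_eq_sum ht, coeff_thetaAlt_mul ht]
  refine sum_congr rfl fun k _ ↦ ?_
  rw [Nat.Partition.card_le_runOfMultiples ht]
  split_ifs <;> simp [partitionSeries]

/-- The Andrews–Newman generating function: for `t ≥ 1`,
`∑_{n≥0} p_{t,t}(n) q^n = (1/(q;q)_∞) ∑_{n≥0} (-1)^n q^{t n(n+1)/2}`, stated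
(equivalently, since `(q;q)_∞` is a unit) in the multiplied-through form. -/
theorem stmt5 (t : ℕ) (ht : 1 ≤ t) :
    (PowerSeries.mk fun n => (pAA t t n : ℤ)) * prodQ 1 = thetaAlt t := by
  rw [mk_pAA_self_eq ht, mul_assoc, partitionSeries_mul_prodQ_one, mul_one]
end

section
/- p_{3,3}(n) equals the number of partitions of n with rank ≥ -1. -/
/-- The rank of a partition: its largest part minus its number of parts. -/
def rankP {n : ℕ} (l : n.Partition) : ℤ :=
  (l.parts.sup : ℤ) - (Multiset.card l.parts : ℤ)


namespace Stmt9Aux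

open Multiset

lemma part_le {n : ℕ} (l : n.Partition) {i : ℕ} (hi : i ∈ l.parts) : i ≤ n := by
  rw [← l.parts_sum]
  exact Multiset.single_le_sum (fun x _ => Nat.zero_le x) i hi

lemma sup_le_n {n : ℕ} (l : n.Partition) : l.parts.sup ≤ n :=
  Multiset.sup_le.mpr fun _ hb => part_le l hb

lemma sup_mem {s : Multiset ℕ} (h : s ≠ 0) : s.sup ∈ s := by
  induction s using Multiset.induction with
  | empty => simp at h
  | cons a s ih =>
    rw [Multiset.sup_cons]
    rcases eq_or_ne s 0 with rfl | hs
    · simp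
    · rcases le_total a s.sup with h1 | h1
      · rw [sup_eq_right.mpr h1]; exact Multiset.mem_cons_of_mem (ih hs)
      · rw [sup_eq_left.mpr h1]; exact Multiset.mem_cons_self a s

lemma parts_eq_zero (l : Nat.Partition 0) : l.parts = 0 := by
  by_contra h
  obtain ⟨x, hx⟩ := Multiset.exists_mem_of_ne_zero h
  have := l.parts_pos hx
  have := part_le l hx
  omega

lemma card_split {α : Type*} [Fintype α] (p : α → Prop) :
    Nat.card {x // p x} + Nat.card {x // ¬ p x} = Nat.card α := by
  classical
  rw [Nat.card_eq_fintype_card, Nat.card_eq_fintype_card, Nat.card_eq_fintype_card,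
    Fintype.card_subtype_compl]
  have := Fintype.card_subtype_le p
  omega

lemma sum_filter_pos (s : Multiset ℕ) : (s.filter (fun x => 0 < x)).sum = s.sum := by
  classical
  conv_rhs => rw [← Multiset.filter_add_not (fun x => 0 < x) s]
  rw [Multiset.sum_add]
  have h0 : (s.filter (fun a => ¬ 0 < a)).sum = 0 := by
    apply Multiset.sum_eq_zero
    intro x hx
    have := Multiset.of_mem_filter hx
    omega
  omega

lemma sum_map_pred (s : Multiset ℕ) (h : ∀ x ∈ s, 0 < x) :
    (s.map (fun x => x - 1)).sum + Multiset.card s = s.sum := by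
  induction s using Multiset.induction with
  | empty => simp
  | cons a s ih =>
    simp only [Multiset.map_cons, Multiset.sum_cons, Multiset.card_cons]
    have ha := h a (Multiset.mem_cons_self a s)
    have hs := ih (fun x hx => h x (Multiset.mem_cons_of_mem hx))
    omega

lemma sum_map_succ (s : Multiset ℕ) :
    (s.map (fun x => x + 1)).sum = s.sum + Multiset.card s := by
  induction s using Multiset.induction with
  | empty => simp
  | cons a s ih =>
    simp only [Multiset.map_cons, Multiset.sum_cons, Multiset.card_cons, ih]
    ring

noncomputable def P (n : ℕ) : ℕ := Nat.card n.Partition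

noncomputable def G (m : ℤ) (n : ℕ) : ℕ := Nat.card {l : n.Partition // m ≤ rankP l}

noncomputable def mj (k : ℕ) {n : ℕ} (l : n.Partition) : ℕ :=
  sInf {j | k ≤ j ∧ 3 * j ∉ l.parts}

noncomputable def F (k n : ℕ) : ℕ :=
  Nat.card {l : n.Partition // (mj k l - k) % 2 = 0}

lemma mj_set_nonempty (k : ℕ) {n : ℕ} (l : n.Partition) :
    {j | k ≤ j ∧ 3 * j ∉ l.parts}.Nonempty := by
  refine ⟨max k (n + 1), le_max_left _ _, fun hm => ?_⟩
  have h1 := part_le l hm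
  have h2 := le_max_right k (n + 1)
  omega

lemma mj_spec (k : ℕ) {n : ℕ} (l : n.Partition) :
    k ≤ mj k l ∧ 3 * mj k l ∉ l.parts :=
  Nat.sInf_mem (mj_set_nonempty k l)

lemma mj_le (k : ℕ) {n : ℕ} (l : n.Partition) {j : ℕ} (hj : k ≤ j)
    (h : 3 * j ∉ l.parts) : mj k l ≤ j :=
  Nat.sInf_le ⟨hj, h⟩

lemma mj_of_notMem {k n : ℕ} {l : n.Partition} (h : 3 * k ∉ l.parts) :
    mj k l = k :=
  le_antisymm (mj_le k l le_rfl h) (mj_spec k l).1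

lemma mj_of_mem {k n : ℕ} {l : n.Partition} (h : 3 * k ∈ l.parts) :
    mj k l = mj (k + 1) l := by
  unfold mj
  congr 1
  ext j
  simp only [Set.mem_setOf_eq]
  constructor
  · rintro ⟨h1, h2⟩
    refine ⟨?_, h2⟩
    rcases Nat.eq_or_lt_of_le h1 with rfl | h'
    · exact absurd h h2
    · omega
  · rintro ⟨h1, h2⟩; exact ⟨by omega, h2⟩

lemma mj_congr {n n' : ℕ} (l : n.Partition) (l' : n'.Partition) (k : ℕ)
    (h : ∀ j, k ≤ j → (3 * j ∈ l.parts ↔ 3 * j ∈ l'.parts)) : mj k l = mj k l' := by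
  unfold mj
  congr 1
  ext j
  simp only [Set.mem_setOf_eq]
  constructor
  · rintro ⟨h1, h2⟩; exact ⟨h1, fun hm => h2 ((h j h1).mpr hm)⟩
  · rintro ⟨h1, h2⟩; exact ⟨h1, fun hm => h2 ((h j h1).mp hm)⟩

lemma F_rec (k N : ℕ) :
    F k N + Nat.card {l : N.Partition //
        3 * k ∈ l.parts ∧ (mj (k + 1) l - (k + 1)) % 2 = 0} = P N := by
  have key : ∀ l : N.Partition,
      ¬ (mj k l - k) % 2 = 0 ↔ (3 * k ∈ l.parts ∧ (mj (k + 1) l - (k + 1)) % 2 = 0) := by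
    intro l
    by_cases h3 : 3 * k ∈ l.parts
    · rw [mj_of_mem h3]
      have hge := (mj_spec (k + 1) l).1
      simp only [h3, true_and]
      omega
    · rw [mj_of_notMem h3]
      simp [h3]
  calc F k N + Nat.card {l : N.Partition //
        3 * k ∈ l.parts ∧ (mj (k + 1) l - (k + 1)) % 2 = 0}
      = F k N + Nat.card {l : N.Partition // ¬ (mj k l - k) % 2 = 0} := by
        congr 1
        exact Nat.card_congr (Equiv.subtypeEquivRight (fun l => (key l).symm))
    _ = P N := card_split _

lemma D_zero (k N : ℕ) (h : N < 3 * k) :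
    Nat.card {l : N.Partition //
        3 * k ∈ l.parts ∧ (mj (k + 1) l - (k + 1)) % 2 = 0} = 0 := by
  have : IsEmpty {l : N.Partition //
      3 * k ∈ l.parts ∧ (mj (k + 1) l - (k + 1)) % 2 = 0} := by
    refine ⟨fun x => ?_⟩
    obtain ⟨l, hl, _⟩ := x
    have := part_le l hl
    omega
  exact Nat.card_of_isEmpty

/-- removing one part equal to `3k` -/
def eraseP (k N : ℕ) (l : N.Partition) (hl : 3 * k ∈ l.parts) : (N - 3 * k).Partition where
  parts := l.parts.erase (3 * k)
  parts_pos := fun hi => l.parts_pos (Multiset.mem_of_mem_erase hi)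
  parts_sum := by
    have h1 := Multiset.sum_erase hl
    have h2 := l.parts_sum
    omega

/-- adding a part equal to `3k` -/
def consP (k N : ℕ) (hk : 1 ≤ k) (h : 3 * k ≤ N) (m : (N - 3 * k).Partition) : N.Partition where
  parts := 3 * k ::ₘ m.parts
  parts_pos := by
    intro i hi
    rcases Multiset.mem_cons.mp hi with rfl | hi'
    · omega
    · exact m.parts_pos hi'
  parts_sum := by
    rw [Multiset.sum_cons, m.parts_sum]
    omega

lemma D_eq (k N : ℕ) (hk : 1 ≤ k) (h : 3 * k ≤ N) :
    Nat.card {l : N.Partition //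
        3 * k ∈ l.parts ∧ (mj (k + 1) l - (k + 1)) % 2 = 0}
      = F (k + 1) (N - 3 * k) := by
  apply Nat.card_congr
  refine
    { toFun := fun x => ⟨eraseP k N x.1 x.2.1, ?_⟩
      invFun := fun y => ⟨consP k N hk h y.1, ?_, ?_⟩
      left_inv := ?_
      right_inv := ?_ }
  · have : mj (k + 1) (eraseP k N x.1 x.2.1) = mj (k + 1) x.1 := by
      apply mj_congr
      intro j hj
      exact Multiset.mem_erase_of_ne (by omega)
    rw [this]
    exact x.2.2
  · exact Multiset.mem_cons_self _ _
  · have : mj (k + 1) (consP k N hk h y.1) = mj (k + 1) y.1 := by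
      apply mj_congr
      intro j hj
      simp only [consP, Multiset.mem_cons]
      constructor
      · rintro (h' | h')
        · omega
        · exact h'
      · intro h'; exact Or.inr h'
    rw [this]
    exact y.2
  · rintro ⟨l, hl1, hl2⟩
    apply Subtype.ext
    apply Nat.Partition.ext
    simp only [consP, eraseP]
    exact Multiset.cons_erase hl1
  · rintro ⟨m, hm⟩
    apply Subtype.ext
    apply Nat.Partition.ext
    simp only [consP, eraseP]
    exact Multiset.erase_cons_head _ _


/-- Dyson's map, forward: given `μ ⊢ N`, produce a partition of `N + r` whose largest part is
`card μ + r` and other parts are the parts of `μ` each reduced by 1 (dropping zeros). -/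
def dysonF (r N : ℕ) (μ : N.Partition) : (N + r).Partition where
  parts := ((Multiset.card μ.parts + r) ::ₘ μ.parts.map (fun x => x - 1)).filter (fun x => 0 < x)
  parts_pos := fun hi => Multiset.of_mem_filter hi
  parts_sum := by
    rw [sum_filter_pos, Multiset.sum_cons]
    have h1 := sum_map_pred μ.parts (fun x hx => μ.parts_pos hx)
    have h2 := μ.parts_sum
    omega

/-- Dyson's map, backward: delete one largest part `a`, add 1 to every remaining part, and pad
with 1's to reach `a - r` parts in total. -/
def dysonG (r N : ℕ) (l : (N + r).Partition)
    (hl : Multiset.card l.parts + r ≤ l.parts.sup + 1) : N.Partition where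
  parts := (l.parts.erase l.parts.sup).map (fun x => x + 1) +
      Multiset.replicate (l.parts.sup - r - (Multiset.card l.parts - 1)) 1
  parts_pos := by
    intro i hi
    rcases Multiset.mem_add.mp hi with hi' | hi'
    · obtain ⟨x, _, rfl⟩ := Multiset.mem_map.mp hi'
      omega
    · rw [Multiset.eq_of_mem_replicate hi']
      omega
  parts_sum := by
    rw [Multiset.sum_add, sum_map_succ, Multiset.sum_replicate, smul_eq_mul, mul_one]
    rcases eq_or_ne l.parts 0 with h0 | h0
    · have hsum := l.parts_sum
      rw [h0] at hsum
      simp only [Multiset.sum_zero] at hsum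
      have hN : N = 0 := by omega
      have hr : r = 0 := by omega
      subst hN; subst hr
      rw [h0]
      simp
    · have hmem : l.parts.sup ∈ l.parts := sup_mem h0
      have hcard : Multiset.card (l.parts.erase l.parts.sup) = Multiset.card l.parts - 1 := by
        rw [Multiset.card_erase_of_mem hmem]; rfl
      have hsum : l.parts.sup + (l.parts.erase l.parts.sup).sum = l.parts.sum :=
        Multiset.sum_erase hmem
      have hps := l.parts_sum
      have hc1 : 1 ≤ Multiset.card l.parts := by
        rcases Multiset.exists_mem_of_ne_zero h0 with ⟨x, hx⟩
        exact Multiset.card_pos.mpr h0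
      have hsup_pos : 1 ≤ l.parts.sup := l.parts_pos hmem
      have hsupN : l.parts.sup ≤ N + r := sup_le_n l
      rw [hcard]
      omega

lemma dysonF_rank (r N : ℕ) (μ : N.Partition)
    (hμ : μ.parts.sup ≤ Multiset.card μ.parts + r + 1) :
    Multiset.card (dysonF r N μ).parts + r ≤ (dysonF r N μ).parts.sup + 1 := by
  rcases Nat.eq_zero_or_pos (Multiset.card μ.parts + r) with h0 | hpos
  · -- μ empty and r = 0
    have hc : Multiset.card μ.parts = 0 := by omega
    have hr : r = 0 := by omega
    have hμ0 : μ.parts = 0 := Multiset.card_eq_zero.mp hc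
    simp only [dysonF, hμ0, hc, hr]
    rw [Multiset.map_zero, Multiset.card_zero,
      Multiset.filter_cons_of_neg _ (by norm_num), Multiset.filter_zero]
    simp
  · have hmem : Multiset.card μ.parts + r ∈ (dysonF r N μ).parts := by
      simp only [dysonF]
      rw [Multiset.mem_filter]
      exact ⟨Multiset.mem_cons_self _ _, hpos⟩
    have hsup : Multiset.card μ.parts + r ≤ (dysonF r N μ).parts.sup :=
      Multiset.le_sup hmem
    have hcard : Multiset.card (dysonF r N μ).parts ≤ Multiset.card μ.parts + 1 := by
      simp only [dysonF]
      calc Multiset.card (((Multiset.card μ.parts + r) ::ₘ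
            μ.parts.map (fun x => x - 1)).filter (fun x => 0 < x))
          ≤ Multiset.card ((Multiset.card μ.parts + r) ::ₘ μ.parts.map (fun x => x - 1)) :=
            Multiset.card_le_card (Multiset.filter_le _ _)
        _ = Multiset.card μ.parts + 1 := by rw [Multiset.card_cons, Multiset.card_map]
    omega

lemma dysonG_rank (r N : ℕ) (l : (N + r).Partition)
    (hl : Multiset.card l.parts + r ≤ l.parts.sup + 1) :
    (dysonG r N l hl).parts.sup ≤ Multiset.card (dysonG r N l hl).parts + r + 1 := by
  rcases eq_or_ne l.parts 0 with h0 | h0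
  · simp only [dysonG, h0]
    simp
  · have hmem : l.parts.sup ∈ l.parts := sup_mem h0
    have hc1 : 1 ≤ Multiset.card l.parts := Multiset.card_pos.mpr h0
    have hsup_ge : r ≤ l.parts.sup := by omega
    have hcard : Multiset.card (dysonG r N l hl).parts = l.parts.sup - r := by
      simp only [dysonG]
      rw [Multiset.card_add, Multiset.card_map, Multiset.card_replicate,
        Multiset.card_erase_of_mem hmem]
      have : (Multiset.card l.parts).pred = Multiset.card l.parts - 1 := rfl
      omega
    have hsup : (dysonG r N l hl).parts.sup ≤ l.parts.sup + 1 := by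
      apply Multiset.sup_le.mpr
      intro b hb
      simp only [dysonG] at hb
      rcases Multiset.mem_add.mp hb with hb' | hb'
      · obtain ⟨x, hx, rfl⟩ := Multiset.mem_map.mp hb'
        have : x ≤ l.parts.sup := Multiset.le_sup (Multiset.mem_of_mem_erase hx)
        omega
      · rw [Multiset.eq_of_mem_replicate hb']
        omega
    omega





lemma dysonGF (r N : ℕ) (μ : N.Partition)
    (hμ : μ.parts.sup ≤ Multiset.card μ.parts + r + 1)
    (h' : Multiset.card (dysonF r N μ).parts + r ≤ (dysonF r N μ).parts.sup + 1) :
    dysonG r N (dysonF r N μ) h' = μ := by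
  classical
  apply Nat.Partition.ext
  rcases eq_or_ne μ.parts 0 with h0 | h0
  · -- empty partition
    rcases Nat.eq_zero_or_pos r with hr | hr
    · have hf : (dysonF r N μ).parts = 0 := by
        simp only [dysonF, h0, hr]
        rw [Multiset.map_zero, Multiset.card_zero,
          Multiset.filter_cons_of_neg _ (by norm_num), Multiset.filter_zero]
      simp only [dysonG, hf, h0]
      simp
    · have hf : (dysonF r N μ).parts = {r} := by
        simp only [dysonF, h0]
        rw [Multiset.map_zero, Multiset.card_zero, zero_add]
        rw [Multiset.filter_cons_of_pos]
        · rw [Multiset.filter_zero]; rfl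
        · exact hr
      have hsup : (dysonF r N μ).parts.sup = r := by rw [hf]; simp
      simp only [dysonG]
      rw [hsup, hf, h0, show ({r} : Multiset ℕ) = r ::ₘ 0 from rfl, Multiset.erase_cons_head]
      simp
  · -- nonempty partition
    have hc1 : 1 ≤ Multiset.card μ.parts := Multiset.card_pos.mpr h0
    have hf : (dysonF r N μ).parts =
        (Multiset.card μ.parts + r) ::ₘ (μ.parts.map (fun x => x - 1)).filter (fun x => 0 < x) := by
      simp only [dysonF]
      rw [Multiset.filter_cons_of_pos _ (by omega)]
    have hw2 : (μ.parts.map (fun x => x - 1)).filter (fun x => 0 < x) =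
        (μ.parts.filter (fun x => 2 ≤ x)).map (fun x => x - 1) := by
      rw [Multiset.filter_map]
      congr 1
      apply Multiset.filter_congr
      intro x hx
      have := μ.parts_pos hx
      simp only [Function.comp_apply]
      omega
    have hwsup : ((μ.parts.map (fun x => x - 1)).filter (fun x => 0 < x)).sup ≤
        Multiset.card μ.parts + r := by
      apply Multiset.sup_le.mpr
      intro b hb
      rw [hw2] at hb
      obtain ⟨x, hx, rfl⟩ := Multiset.mem_map.mp hb
      have hxs : x ∈ μ.parts := Multiset.mem_of_mem_filter hx
      have := Multiset.le_sup hxs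
      omega
    have hsup : (dysonF r N μ).parts.sup = Multiset.card μ.parts + r := by
      rw [hf, Multiset.sup_cons, sup_eq_left.mpr hwsup]
    have hcard : Multiset.card (dysonF r N μ).parts =
        1 + Multiset.card ((μ.parts.map (fun x => x - 1)).filter (fun x => 0 < x)) := by
      rw [hf, Multiset.card_cons]; omega
    simp only [dysonG]
    rw [hsup, hcard, hf, Multiset.erase_cons_head]
    have hmapw : ((μ.parts.map (fun x => x - 1)).filter (fun x => 0 < x)).map (fun x => x + 1) =
        μ.parts.filter (fun x => 2 ≤ x) := by
      rw [hw2, Multiset.map_map]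
      have hcongr : ∀ x ∈ μ.parts.filter (fun x => 2 ≤ x),
          ((fun x => x + 1) ∘ (fun x => x - 1)) x = id x := by
        intro x hx
        have := Multiset.of_mem_filter hx
        simp only [Function.comp_apply, id_eq]
        omega
      rw [Multiset.map_congr rfl hcongr, Multiset.map_id]
    have hsplit : μ.parts.filter (fun x => 2 ≤ x) + μ.parts.filter (fun x => ¬ 2 ≤ x) = μ.parts :=
      Multiset.filter_add_not _ _
    have hcards : Multiset.card (μ.parts.filter (fun x => 2 ≤ x)) +
        Multiset.card (μ.parts.filter (fun x => ¬ 2 ≤ x)) = Multiset.card μ.parts := by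
      rw [← Multiset.card_add, hsplit]
    have hcw : Multiset.card ((μ.parts.map (fun x => x - 1)).filter (fun x => 0 < x)) =
        Multiset.card (μ.parts.filter (fun x => 2 ≤ x)) := by
      rw [hw2, Multiset.card_map]
    have hones : μ.parts.filter (fun x => ¬ 2 ≤ x) =
        Multiset.replicate (Multiset.card (μ.parts.filter (fun x => ¬ 2 ≤ x))) 1 := by
      rw [Multiset.eq_replicate]
      refine ⟨rfl, fun b hb => ?_⟩
      have h1 := Multiset.of_mem_filter hb
      have h2 := μ.parts_pos (Multiset.mem_of_mem_filter hb)
      omega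
    have hK : Multiset.card μ.parts + r - r -
        (1 + Multiset.card ((μ.parts.map (fun x => x - 1)).filter (fun x => 0 < x)) - 1) =
        Multiset.card (μ.parts.filter (fun x => ¬ 2 ≤ x)) := by omega
    rw [hmapw, hK, ← hones]
    exact hsplit

lemma dysonFG (r N : ℕ) (l : (N + r).Partition)
    (hl : Multiset.card l.parts + r ≤ l.parts.sup + 1) :
    dysonF r N (dysonG r N l hl) = l := by
  classical
  apply Nat.Partition.ext
  rcases eq_or_ne l.parts 0 with h0 | h0
  · have hsum := l.parts_sum
    rw [h0] at hsum
    simp only [Multiset.sum_zero] at hsum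
    have hr : r = 0 := by omega
    have hg : (dysonG r N l hl).parts = 0 := by
      simp only [dysonG, h0]
      simp
    simp only [dysonF, hg, h0]
    rw [Multiset.map_zero, Multiset.card_zero, hr,
      Multiset.filter_cons_of_neg _ (by norm_num), Multiset.filter_zero]
  · have hmem : l.parts.sup ∈ l.parts := sup_mem h0
    have ha1 : 1 ≤ l.parts.sup := l.parts_pos hmem
    have hc1 : 1 ≤ Multiset.card l.parts := Multiset.card_pos.mpr h0
    have har : r ≤ l.parts.sup := by omega
    have hcard : Multiset.card (dysonG r N l hl).parts = l.parts.sup - r := by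
      simp only [dysonG]
      rw [Multiset.card_add, Multiset.card_map, Multiset.card_replicate,
        Multiset.card_erase_of_mem hmem]
      have hpred : (Multiset.card l.parts).pred = Multiset.card l.parts - 1 := rfl
      rw [hpred]
      omega
    have hmappred : (dysonG r N l hl).parts.map (fun x => x - 1) =
        l.parts.erase l.parts.sup +
          Multiset.replicate (l.parts.sup - r - (Multiset.card l.parts - 1)) 0 := by
      simp only [dysonG]
      rw [Multiset.map_add, Multiset.map_map, Multiset.map_replicate]
      congr 1
      have hcongr : ∀ x ∈ l.parts.erase l.parts.sup,
          ((fun x => x - 1) ∘ (fun x => x + 1)) x = id x := by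
        intro x _
        simp only [Function.comp_apply, id_eq]
        omega
      rw [Multiset.map_congr rfl hcongr, Multiset.map_id]
    simp only [dysonF]
    rw [hcard, hmappred, show l.parts.sup - r + r = l.parts.sup by omega,
      Multiset.filter_cons_of_pos _ (by omega), Multiset.filter_add]
    have h1 : (l.parts.erase l.parts.sup).filter (fun x => 0 < x) = l.parts.erase l.parts.sup := by
      apply Multiset.filter_eq_self.mpr
      intro x hx
      exact l.parts_pos (Multiset.mem_of_mem_erase hx)
    have h2 : (Multiset.replicate (l.parts.sup - r - (Multiset.card l.parts - 1)) (0:ℕ)).filter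
        (fun x => 0 < x) = 0 := by
      apply Multiset.filter_eq_nil.mpr
      intro x hx
      rw [Multiset.eq_of_mem_replicate hx]
      omega
    rw [h1, h2, add_zero]
    exact Multiset.cons_erase hmem




/-! ### Dyson's identity, counting form -/

lemma rank_le_iff {n : ℕ} (l : n.Partition) (r : ℕ) :
    rankP l ≤ (r : ℤ) + 1 ↔ l.parts.sup ≤ Multiset.card l.parts + r + 1 := by
  unfold rankP; omega

lemma rank_ge_iff {n : ℕ} (l : n.Partition) (r : ℕ) :
    (r : ℤ) - 1 ≤ rankP l ↔ Multiset.card l.parts + r ≤ l.parts.sup + 1 := by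
  unfold rankP; omega

noncomputable def dysonEquiv (r N : ℕ) :
    {μ : N.Partition // rankP μ ≤ (r : ℤ) + 1} ≃
      {l : (N + r).Partition // (r : ℤ) - 1 ≤ rankP l} where
  toFun x := ⟨dysonF r N x.1, (rank_ge_iff _ _).mpr (dysonF_rank r N x.1 ((rank_le_iff _ _).mp x.2))⟩
  invFun y := ⟨dysonG r N y.1 ((rank_ge_iff _ _).mp y.2),
    (rank_le_iff _ _).mpr (dysonG_rank r N y.1 ((rank_ge_iff _ _).mp y.2))⟩
  left_inv x := Subtype.ext (dysonGF r N x.1 ((rank_le_iff _ _).mp x.2)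
    (dysonF_rank r N x.1 ((rank_le_iff _ _).mp x.2)))
  right_inv y := Subtype.ext (dysonFG r N y.1 ((rank_ge_iff _ _).mp y.2))

lemma dyson (r N : ℕ) : G ((r : ℤ) - 1) (N + r) + G ((r : ℤ) + 2) N = P N := by
  have e1 : G ((r : ℤ) - 1) (N + r) = Nat.card {μ : N.Partition // ¬ ((r : ℤ) + 2 ≤ rankP μ)} := by
    unfold G
    apply Nat.card_congr
    refine (dysonEquiv r N).symm.trans (Equiv.subtypeEquivRight fun μ => ?_)
    omega
  rw [e1, add_comm]
  unfold G P
  exact card_split _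

lemma G_zero {m : ℤ} {N : ℕ} (hN : (N : ℤ) ≤ m) (hm : 0 < m) : G m N = 0 := by
  have : IsEmpty {l : N.Partition // m ≤ rankP l} := by
    refine ⟨fun x => ?_⟩
    obtain ⟨l, hl⟩ := x
    rcases Nat.eq_zero_or_pos N with rfl | hN1
    · have h0 : l.parts = 0 := parts_eq_zero l
      have hr : rankP l = 0 := by
        unfold rankP
        rw [h0]
        simp
      omega
    · have h1 : l.parts.sup ≤ N := sup_le_n l
      have h2 : 1 ≤ Multiset.card l.parts := by
        apply Multiset.card_pos.mpr
        intro hc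
        have := l.parts_sum
        rw [hc] at this
        simp at this
        omega
      unfold rankP at hl
      omega
  exact Nat.card_of_isEmpty

/-! ### The main induction -/

lemma main : ∀ N k : ℕ, 1 ≤ k → F k N = G (3 * (k : ℤ) - 4) (N + 3 * (k - 1)) := by
  intro N
  induction N using Nat.strong_induction_on with
  | _ N IH =>
    intro k hk
    have hd := dyson (3 * (k - 1)) N
    have hcast1 : ((3 * (k - 1) : ℕ) : ℤ) - 1 = 3 * (k : ℤ) - 4 := by
      have : (((k : ℕ) - 1 : ℕ) : ℤ) = (k : ℤ) - 1 := by omega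
      push_cast [this]
      ring
    have hcast2 : ((3 * (k - 1) : ℕ) : ℤ) + 2 = 3 * (k : ℤ) - 1 := by
      have : (((k : ℕ) - 1 : ℕ) : ℤ) = (k : ℤ) - 1 := by omega
      push_cast [this]
      ring
    rw [hcast1, hcast2] at hd
    have hf := F_rec k N
    rcases lt_or_ge N (3 * k) with hN | hN
    · have hz := D_zero k N hN
      have hgz : G (3 * (k : ℤ) - 1) N = 0 := by
        apply G_zero
        · omega
        · omega
      omega
    · have hD := D_eq k N hk hN
      have hIH := IH (N - 3 * k) (by omega) (k + 1) (by omega)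
      have hcast3 : 3 * ((k : ℕ) + 1 : ℕ) - 4 = (3 * (k : ℤ) - 1 : ℤ) := by push_cast; ring
      rw [hcast3] at hIH
      have harg : (N - 3 * k) + 3 * ((k + 1) - 1) = N := by omega
      rw [harg] at hIH
      omega

/-! ### Identification of `pAA 3 3` with `F 1` -/

lemma mexP_eq {n : ℕ} (l : n.Partition) : mexP 3 3 l = 3 * mj 1 l := by
  have hspec := mj_spec 1 l
  have hmem : 3 * mj 1 l ∈ {k : ℕ | 0 < k ∧ k % 3 = 3 % 3 ∧ k ∉ l.parts} := by
    refine ⟨by omega, by omega, hspec.2⟩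
  apply le_antisymm
  · exact Nat.sInf_le hmem
  · have hne : {k : ℕ | 0 < k ∧ k % 3 = 3 % 3 ∧ k ∉ l.parts}.Nonempty := ⟨_, hmem⟩
    have hin := Nat.sInf_mem hne
    obtain ⟨h1, h2, h3⟩ := hin
    obtain ⟨j, hj⟩ : ∃ j, sInf {k : ℕ | 0 < k ∧ k % 3 = 3 % 3 ∧ k ∉ l.parts} = 3 * j := by
      refine ⟨sInf {k : ℕ | 0 < k ∧ k % 3 = 3 % 3 ∧ k ∉ l.parts} / 3, by omega⟩
    rw [hj] at h1 h3
    show 3 * mj 1 l ≤ sInf {k : ℕ | 0 < k ∧ k % 3 = 3 % 3 ∧ k ∉ l.parts}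
    rw [hj]
    have hjle : mj 1 l ≤ j := mj_le 1 l (by omega) h3
    omega

lemma pAA_eq_F (n : ℕ) : pAA 3 3 n = F 1 n := by
  unfold pAA F
  apply Nat.card_congr
  apply Equiv.subtypeEquivRight
  intro l
  rw [mexP_eq l]
  have h1 := (mj_spec 1 l).1
  constructor
  · intro h; omega
  · intro h; omega

end Stmt9Aux

/-- `p_{3,3}(n)` equals the number of partitions of `n` with rank `≥ -1`. -/
theorem stmt9 (n : ℕ) :
    pAA 3 3 n = Nat.card {l : n.Partition // -1 ≤ rankP l} := by
  have h := Stmt9Aux.main n 1 le_rfl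
  rw [Stmt9Aux.pAA_eq_F]
  have h1 : 3 * ((1 : ℕ) : ℤ) - 4 = -1 := by norm_num
  have h2 : n + 3 * (1 - 1) = n := by norm_num
  rw [h1, h2] at h
  rw [h]
  unfold Stmt9Aux.G
  rfl
end

section
/- For all positive integers α and d dividing 9·2^{α+6}, the quantity L(d) := (2^{α+2}+6)·gcd(d, 3·2^{α+3})²/gcd(d, 3·2^{α+4})² − 2^{α+1}·gcd(d, 24)²/gcd(d, 3·2^{α+4})² − 2^α is non-negative. -/
lemma gcd_mul_pow_aux (m n b k : ℕ) (hm : ¬ 2 ∣ m) (hn : ¬ 2 ∣ n) :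
    Nat.gcd (m * 2 ^ b) (n * 2 ^ k) = Nat.gcd m n * 2 ^ (min b k) := by
  rcases le_total b k with h | h
  · rw [min_eq_left h]
    have : 2 ^ k = 2 ^ b * 2 ^ (k - b) := by rw [← pow_add]; congr 1; omega
    rw [this, ← mul_assoc, mul_comm m (2^b), mul_comm n (2^b), mul_assoc,
      Nat.gcd_mul_left, mul_comm]
    congr 1
    apply Nat.Coprime.gcd_mul_right_cancel_right
    exact Nat.Coprime.pow_left _ (Nat.coprime_two_left.mpr (Nat.odd_iff.mpr (show m % 2 = 1 by omega)))
  · rw [min_eq_right h]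
    have : 2 ^ b = 2 ^ k * 2 ^ (b - k) := by rw [← pow_add]; congr 1; omega
    rw [this, ← mul_assoc, mul_comm m (2^k), mul_assoc, mul_comm n (2^k),
      Nat.gcd_mul_left, mul_comm]
    congr 1
    apply Nat.Coprime.gcd_mul_right_cancel
    exact Nat.Coprime.pow_left _ (Nat.coprime_two_left.mpr (Nat.odd_iff.mpr (show n % 2 = 1 by omega)))

/-- For `α ≥ 1` and `d ∣ 9·2^{α+6}`, the holomorphy quantity
`L(d) = (2^{α+2}+6)·gcd(d,3·2^{α+3})²/gcd(d,3·2^{α+4})²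
        - 2^{α+1}·gcd(d,24)²/gcd(d,3·2^{α+4})² - 2^α` is non-negative. -/
theorem stmt15 (α : ℕ) (hα : 1 ≤ α) (d : ℕ) (hd : d ∣ 9 * 2 ^ (α + 6)) :
    (0 : ℚ) ≤
      ((2 : ℚ) ^ (α + 2) + 6) * (Nat.gcd d (3 * 2 ^ (α + 3)) : ℚ) ^ 2
          / (Nat.gcd d (3 * 2 ^ (α + 4)) : ℚ) ^ 2
        - (2 : ℚ) ^ (α + 1) * (Nat.gcd d 24 : ℚ) ^ 2
          / (Nat.gcd d (3 * 2 ^ (α + 4)) : ℚ) ^ 2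
        - (2 : ℚ) ^ α := by
  obtain ⟨m, t, hm9, ht, rfl⟩ := Nat.dvd_mul.mp hd
  obtain ⟨b, hb, rfl⟩ := (Nat.dvd_prime_pow Nat.prime_two).mp ht
  have hm : ¬ 2 ∣ m := fun h => by
    have : (2:ℕ) ∣ 9 := h.trans hm9
    omega
  have h24 : (24:ℕ) = 3 * 2 ^ 3 := by norm_num
  rw [h24, gcd_mul_pow_aux m 3 b (α+3) hm (by norm_num),
    gcd_mul_pow_aux m 3 b (α+4) hm (by norm_num),
    gcd_mul_pow_aux m 3 b 3 hm (by norm_num)]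
  set g := Nat.gcd m 3 with hg
  have hgpos : 0 < g := Nat.gcd_pos_of_pos_right m (by norm_num)
  have hG : (1:ℚ) ≤ (g:ℚ) := by exact_mod_cast hgpos
  have htα : (2:ℚ) ≤ (2:ℚ) ^ α := by
    calc (2:ℚ) = 2 ^ 1 := (pow_one 2).symm
    _ ≤ 2 ^ α := by apply pow_le_pow_right₀ (by norm_num) hα
  push_cast
  rcases le_or_gt b (α + 3) with hb3 | hb4
  · -- b ≤ α+3 : both big gcd powers are 2^b
    rw [min_eq_left hb3, min_eq_left (by omega : b ≤ α + 4)]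
    have hj : min b 3 ≤ b := min_le_left _ _
    have hzx : (2:ℚ) ^ (min b 3) ≤ 2 ^ b := pow_le_pow_right₀ (by norm_num) hj
    have hD : (0:ℚ) < ((g:ℚ) * 2 ^ b) ^ 2 := by positivity
    rw [div_sub_div_same, sub_nonneg, le_div_iff₀ hD]
    have e1 : (2:ℚ) ^ (α + 1) = 2 ^ α * 2 := by rw [pow_add]; norm_num
    have e2 : (2:ℚ) ^ (α + 2) = 2 ^ α * 4 := by rw [pow_add]; norm_num
    rw [e1, e2]
    have hz0 : (0:ℚ) < 2 ^ (min b 3) := by positivity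
    have key : (g:ℚ)^2 * (2 ^ (min b 3) * 2 ^ (min b 3)) ≤ (g:ℚ)^2 * (2 ^ b * 2 ^ b) :=
      mul_le_mul_of_nonneg_left (mul_le_mul hzx hzx (le_of_lt hz0) (by positivity))
        (by positivity)
    nlinarith [mul_le_mul_of_nonneg_left key (by positivity : (0:ℚ) ≤ 2 ^ α),
      mul_nonneg (by positivity : (0:ℚ) ≤ 2 ^ α) (sq_nonneg ((g:ℚ) * 2 ^ b)),
      sq_nonneg ((g:ℚ) * 2 ^ b)]
  · -- b ≥ α+4
    rw [min_eq_right (by omega : α + 3 ≤ b), min_eq_right (by omega : α + 4 ≤ b),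
      min_eq_right (by omega : 3 ≤ b)]
    have hD : (0:ℚ) < ((g:ℚ) * 2 ^ (α + 4)) ^ 2 := by positivity
    rw [div_sub_div_same, sub_nonneg, le_div_iff₀ hD]
    have e1 : (2:ℚ) ^ (α + 1) = 2 ^ α * 2 := by rw [pow_add]; norm_num
    have e2 : (2:ℚ) ^ (α + 2) = 2 ^ α * 4 := by rw [pow_add]; norm_num
    have e3 : (2:ℚ) ^ (α + 3) = 2 ^ α * 8 := by rw [pow_add]; norm_num
    have e4 : (2:ℚ) ^ (α + 4) = 2 ^ α * 16 := by rw [pow_add]; norm_num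
    rw [e1, e2, e3, e4]
    nlinarith [sq_nonneg ((g:ℚ)), mul_pos (lt_of_lt_of_le two_pos htα) (lt_of_lt_of_le two_pos htα),
      mul_le_mul hG hG (by norm_num) (by linarith),
      mul_le_mul htα htα (by norm_num) (by linarith)]
end

section
/- For all positive integers α and d dividing 9·2^{α+6}, the quantity K(d) := (2^{α+3}+6)·gcd(d, 9·2^{α+3})²/gcd(d, 9·2^{α+4})² − 3·2^{α+1}·gcd(d, 24)²/gcd(d, 9·2^{α+4})² − 2^{α+1} is non-negative. -/
private lemma gcd_aux (u w a k : ℕ) (hu : Nat.Coprime u 2) (hw : Nat.Coprime 2 w) :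
    Nat.gcd (u * 2 ^ a) (w * 2 ^ k) = Nat.gcd u w * 2 ^ (min a k) := by
  rcases le_total a k with h | h
  · obtain ⟨c, rfl⟩ : ∃ c, k = a + c := ⟨k - a, by omega⟩
    rw [min_eq_left h, pow_add, show u * 2 ^ a = 2 ^ a * u by ring,
      show w * (2 ^ a * 2 ^ c) = 2 ^ a * (w * 2 ^ c) by ring, Nat.gcd_mul_left,
      Nat.Coprime.gcd_mul_right_cancel_right w ((hu.symm.pow_left c))]
    ring
  · obtain ⟨c, rfl⟩ : ∃ c, a = k + c := ⟨a - k, by omega⟩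
    rw [min_eq_right h, pow_add, show u * (2 ^ k * 2 ^ c) = 2 ^ k * (u * 2 ^ c) by ring,
      show w * 2 ^ k = 2 ^ k * w by ring, Nat.gcd_mul_left,
      Nat.Coprime.gcd_mul_right_cancel u ((hw.pow_left c))]
    ring

private lemma keyA (α : ℕ) (c g : ℚ) (hc : 0 ≤ c) (hg : 0 < g) (hcg : c ≤ g) :
    (0 : ℚ) ≤ (2 ^ (α + 3) + 6) * g ^ 2 / g ^ 2 - 3 * 2 ^ (α + 1) * c ^ 2 / g ^ 2
      - 2 ^ (α + 1) := by
  have hg2 : (0 : ℚ) < g ^ 2 := by positivity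
  have hY : (0 : ℚ) < 2 ^ (α + 1) := by positivity
  have e : (2 : ℚ) ^ (α + 3) = 2 ^ (α + 1) * 4 := by
    rw [show α + 3 = α + 1 + 2 from rfl, pow_add]; norm_num
  rw [mul_div_assoc, div_self hg2.ne', mul_one, e]
  have h1 : 3 * 2 ^ (α + 1) * c ^ 2 / g ^ 2 ≤ 3 * 2 ^ (α + 1) := by
    rw [div_le_iff₀ hg2]
    nlinarith [mul_le_mul hcg hcg hc hg.le, hY.le]
  linarith

private lemma keyB (α : ℕ) (hα : 1 ≤ α) (c g : ℚ) (hc : 0 ≤ c) (hg : 0 < g)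
    (h : 2 ^ (α + 1) * c ≤ 2 * g) :
    (0 : ℚ) ≤ (2 ^ (α + 3) + 6) * g ^ 2 / (2 * g) ^ 2
      - 3 * 2 ^ (α + 1) * c ^ 2 / (2 * g) ^ 2 - 2 ^ (α + 1) := by
  have hg2 : (0 : ℚ) < (2 * g) ^ 2 := by positivity
  have hY : (4 : ℚ) ≤ 2 ^ (α + 1) := by
    calc (4 : ℚ) = 2 ^ 2 := by norm_num
    _ ≤ 2 ^ (α + 1) := pow_le_pow_right₀ one_le_two (by omega)
  have e : (2 : ℚ) ^ (α + 3) = 2 ^ (α + 1) * 4 := by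
    rw [show α + 3 = α + 1 + 2 from rfl, pow_add]; norm_num
  have h2 : (2 ^ (α + 1) * c) ^ 2 ≤ (2 * g) ^ 2 :=
    pow_le_pow_left₀ (by positivity) h 2
  have key : 3 * 2 ^ (α + 1) * c ^ 2 / (2 * g) ^ 2 ≤ 3 / 2 := by
    rw [div_le_iff₀ hg2]
    nlinarith [mul_nonneg (mul_nonneg (sub_nonneg.2 hY)
      (by positivity : (0:ℚ) ≤ 2 ^ (α + 1))) (sq_nonneg c), sq_nonneg g]
  have q : (2 ^ (α + 1) * 4 + 6) * g ^ 2 / (2 * g) ^ 2 = 2 ^ (α + 1) + 3 / 2 := by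
    field_simp
    ring
  rw [e, q]
  linarith

/-- For `α ≥ 1` and `d ∣ 9·2^{α+6}`, the holomorphy quantity
`K(d) = (2^{α+3}+6)·gcd(d,9·2^{α+3})²/gcd(d,9·2^{α+4})²
        - 3·2^{α+1}·gcd(d,24)²/gcd(d,9·2^{α+4})² - 2^{α+1}` is non-negative. -/
theorem stmt16 (α : ℕ) (hα : 1 ≤ α) (d : ℕ) (hd : d ∣ 9 * 2 ^ (α + 6)) :
    (0 : ℚ) ≤
      ((2 : ℚ) ^ (α + 3) + 6) * (Nat.gcd d (9 * 2 ^ (α + 3)) : ℚ) ^ 2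
          / (Nat.gcd d (9 * 2 ^ (α + 4)) : ℚ) ^ 2
        - 3 * (2 : ℚ) ^ (α + 1) * (Nat.gcd d 24 : ℚ) ^ 2
          / (Nat.gcd d (9 * 2 ^ (α + 4)) : ℚ) ^ 2
        - (2 : ℚ) ^ (α + 1) := by
  obtain ⟨u, v, hu, hv, rfl⟩ := exists_dvd_and_dvd_of_dvd_mul hd
  obtain ⟨a, ha, rfl⟩ := (Nat.dvd_prime_pow Nat.prime_two).mp hv
  have hu2 : Nat.Coprime u 2 := Nat.Coprime.coprime_dvd_left hu (by decide)
  have hu0 : 0 < u := Nat.pos_of_dvd_of_pos hu (by norm_num)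
  have hg9 : Nat.gcd u 9 = u := Nat.gcd_eq_left hu
  have hg3 : Nat.gcd u 3 ≤ u := Nat.gcd_le_left _ hu0
  rw [show (24 : ℕ) = 3 * 2 ^ 3 by norm_num,
    gcd_aux u 9 a (α + 3) hu2 (by decide), gcd_aux u 9 a (α + 4) hu2 (by decide),
    gcd_aux u 3 a 3 hu2 (by decide), hg9]
  rcases le_or_gt a (α + 3) with h | h
  · rw [min_eq_left h, min_eq_left (by omega : a ≤ α + 4)]
    apply keyA α _ _ (by positivity) (by positivity)
    have hn : Nat.gcd u 3 * 2 ^ (min a 3) ≤ u * 2 ^ a :=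
      Nat.mul_le_mul hg3 (Nat.pow_le_pow_right (by norm_num) (min_le_left a 3))
    exact_mod_cast hn
  · rw [min_eq_right (by omega : α + 3 ≤ a), min_eq_right (by omega : α + 4 ≤ a),
      min_eq_right (by omega : 3 ≤ a)]
    have hGg : ((u * 2 ^ (α + 4) : ℕ) : ℚ) = 2 * ((u * 2 ^ (α + 3) : ℕ) : ℚ) := by
      push_cast [pow_succ]; ring
    rw [hGg]
    apply keyB α hα _ _ (by positivity) (by positivity)
    rw [← hGg]
    have hn : Nat.gcd u 3 * 2 ^ (α + 4) ≤ u * 2 ^ (α + 4) :=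
      Nat.mul_le_mul_right _ hg3
    calc (2 : ℚ) ^ (α + 1) * ((Nat.gcd u 3 * 2 ^ 3 : ℕ) : ℚ)
        = ((Nat.gcd u 3 * 2 ^ (α + 4) : ℕ) : ℚ) := by
          push_cast [show α + 4 = α + 1 + 3 from rfl, pow_add]; ring
      _ ≤ ((u * 2 ^ (α + 4) : ℕ) : ℚ) := by exact_mod_cast hn
end
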